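/- For every t ∈ (−3/10, +∞), the alternating 3-form φ₂(t) = e^{147} + e^{267} + e^{357} + ((10/3)t + 1)^{3/5}·e^{123} + e^{156} + e^{245} − e^{346} on the Lie algebra 𝔫₂ is closed with respect to the Chevalley–Eilenberg differential: dφ₂(t) = 0. -/
import Mathlib


/-- The basic alternating 3-form `e^{(i+1)(j+1)(k+1)} = eⁱ⁺¹∧eʲ⁺¹∧eᵏ⁺¹`
on ℝ⁷ = Fin 7 → ℝ, evaluated on three vectors (indices are 0-based). -/
def triForm (i j k : Fin 7) (x y z : Fin 7 → ℝ) : ℝ :=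
  x i * (y j * z k - y k * z j) - x j * (y i * z k - y k * z i) +
    x k * (y i * z j - y j * z i)

/-- The Chevalley–Eilenberg differential of an alternating 3-form `φ` with
respect to a bracket `br`, evaluated at (x₀,x₁,x₂,x₃):
dφ(x₀,x₁,x₂,x₃) = Σ_{0≤i<j≤3} (−1)^{i+j} φ([xᵢ,xⱼ], …omitting xᵢ,xⱼ…). -/
def CEdiff (br : (Fin 7 → ℝ) → (Fin 7 → ℝ) → (Fin 7 → ℝ))
    (φ : (Fin 7 → ℝ) → (Fin 7 → ℝ) → (Fin 7 → ℝ) → ℝ)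
    (x0 x1 x2 x3 : Fin 7 → ℝ) : ℝ :=
  -φ (br x0 x1) x2 x3 + φ (br x0 x2) x1 x3 - φ (br x0 x3) x1 x2
    - φ (br x1 x2) x0 x3 + φ (br x1 x3) x0 x2 - φ (br x2 x3) x0 x1

/-- The Lie bracket of 𝔫₂: [e₁,e₂] = e₅, [e₁,e₃] = e₆ (0-based: [e₀,e₁] = e₄,
[e₀,e₂] = e₅), extended bilinearly. -/
def brN2 (x y : Fin 7 → ℝ) : Fin 7 → ℝ :=
  ![0, 0, 0, 0, x 0 * y 1 - x 1 * y 0, x 0 * y 2 - x 2 * y 0, 0]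

/-- The Laplacian-flow solution
φ₂(t) = e^{147} + e^{267} + e^{357} + ((10/3)t+1)^{3/5}·e^{123} + e^{156} +
e^{245} − e^{346}. -/
noncomputable def phi2t (t : ℝ) (x y z : Fin 7 → ℝ) : ℝ :=
  triForm 0 3 6 x y z + triForm 1 5 6 x y z + triForm 2 4 6 x y z +
    ((10 / 3) * t + 1) ^ ((3 : ℝ) / 5) * triForm 0 1 2 x y z +
    triForm 0 4 5 x y z + triForm 1 3 4 x y z - triForm 2 3 5 x y z

lemma br0 (x y : Fin 7 → ℝ) : brN2 x y 0 = 0 := rfl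
lemma br1 (x y : Fin 7 → ℝ) : brN2 x y 1 = 0 := rfl
lemma br2 (x y : Fin 7 → ℝ) : brN2 x y 2 = 0 := rfl
lemma br3 (x y : Fin 7 → ℝ) : brN2 x y 3 = 0 := rfl
lemma br4 (x y : Fin 7 → ℝ) : brN2 x y 4 = x 0 * y 1 - x 1 * y 0 := rfl
lemma br5 (x y : Fin 7 → ℝ) : brN2 x y 5 = x 0 * y 2 - x 2 * y 0 := rfl
lemma br6 (x y : Fin 7 → ℝ) : brN2 x y 6 = 0 := rfl

/-- for every t ∈ (−3/10, ∞), the 3-form φ₂(t) on the Lie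
algebra 𝔫₂ is closed:  dφ₂(t) = 0. -/
theorem phi2t_closed :
    ∀ t ∈ Set.Ioi (-(3 : ℝ) / 10),
      ∀ x0 x1 x2 x3 : Fin 7 → ℝ, CEdiff brN2 (phi2t t) x0 x1 x2 x3 = 0 := by
  intro t _ x0 x1 x2 x3
  simp only [CEdiff, phi2t, triForm, br0, br1, br2, br3, br4, br5, br6]
  ring
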